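/- arXiv:1112.4424 — 2 statements merged into one kernel-verified Lean document; each statement's English description precedes it below -/
import Mathlib

section
/- If X ⊆ 2^ω has strong measure zero, then for every closed set F ⊆ 2^ω of measure zero, the algebraic sum X + F = {x + f : x ∈ X, f ∈ F} has outer measure zero. (Forward direction of Pawlikowski's characterization, Theorem 1.) -/
open MeasureTheory Set Pointwise
open scoped Classical

/-- The Cantor group `2^ω = ℕ → ZMod 2` with coordinatewise addition mod 2,
carrying the product topology. -/
abbrev Cantor : Type := ℕ → ZMod 2

/-- The Haar probability measure `μ` on `2^ω` (the normalized Haar measure on the compact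
group `ℕ → ZMod 2`; by uniqueness of Haar probability measures it coincides with the infinite
product of the uniform probability measure on `ZMod 2`). Since a `Measure` in Mathlib is
defined on all sets via the induced outer measure, `cantorMeasure A = 0` says exactly that
`A` has outer measure zero, i.e. that `A` is null. -/
noncomputable def cantorMeasure : Measure Cantor :=
  Measure.addHaarMeasure (⊤ : TopologicalSpace.PositiveCompacts Cantor)

/-- The standard distance on `2^ω`: `d(x,y) = 2^{-n}` where `n` is the least index at which
`x` and `y` differ (and `d(x,y) = 0` if `x = y`). It induces the product topology. -/
noncomputable def cantorDist (x y : Cantor) : ℝ :=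
  if x = y then 0 else (1 / 2 : ℝ) ^ sInf {n : ℕ | x n ≠ y n}

/-- The open ball around `x` of radius `ε` with respect to `cantorDist`. -/
def cantorBall (x : Cantor) (ε : ℝ) : Set Cantor :=
  {y | cantorDist x y < ε}

/-- `X ⊆ 2^ω` has strong measure zero (smz): for every sequence `(ε n)` of positive reals
there is a sequence `(c n)` of points of `2^ω` with `X ⊆ ⋃ n, ball (c n) (ε n)`. -/
def HasStrongMeasureZero (X : Set Cantor) : Prop :=
  ∀ ε : ℕ → ℝ, (∀ n, 0 < ε n) → ∃ c : ℕ → Cantor, X ⊆ ⋃ n, cantorBall (c n) (ε n)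

/-!
A strong measure zero set `X` can be covered by cylinders `c n + V (k n)` of any prescribed
lengths `k n`, where `V k` is the clopen subgroup of sequences vanishing below `k`. As `F` is
closed, the compact sets `V k + F` decrease to `F`, so their measures tend to `μ F = 0`. Choosing
`k n` with `μ (V (k n) + F) < ε n` for a sequence `ε` of sum at most `ε₀`, the translates
`c n + (V (k n) + F)` cover `X + F` and, by translation invariance, have total measure at most `ε₀`.
-/

open Filter Topology PiNat
open scoped ENNReal

theorem measure_add_eq_zero_of_forall_translate_cover {G : Type*} [AddGroup G]
    [MeasurableSpace G] {μ : Measure G} [μ.IsAddLeftInvariant] {X F : Set G} {V : ℕ → Set G}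
    (hV : Tendsto (fun k => μ (V k + F)) atTop (𝓝 0))
    (hX : ∀ k : ℕ → ℕ, ∃ c : ℕ → G, X ⊆ ⋃ n, c n +ᵥ V (k n)) :
    μ (X + F) = 0 := by
  refine le_antisymm (ENNReal.le_of_forall_pos_le_add fun ε hε _ => ?_) zero_le
  obtain ⟨ε', hε'_pos, hε'_sum⟩ :=
    ENNReal.exists_pos_sum_of_countable (ENNReal.coe_ne_zero.mpr hε.ne') ℕ
  have hsmall : ∀ n, ∃ k, μ (V k + F) < ε' n := fun n =>
    (hV.eventually (gt_mem_nhds (ENNReal.coe_pos.mpr (hε'_pos n)))).exists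
  choose k hk using hsmall
  obtain ⟨c, hc⟩ := hX k
  have hcover : X + F ⊆ ⋃ n, c n +ᵥ (V (k n) + F) := by
    calc X + F ⊆ (⋃ n, c n +ᵥ V (k n)) + F := add_subset_add_right hc
      _ = ⋃ n, c n +ᵥ (V (k n) + F) := by simp_rw [iUnion_add, vadd_add_assoc]
  calc μ (X + F) ≤ ∑' n, μ (c n +ᵥ (V (k n) + F)) := measure_mono hcover |>.trans
        (measure_iUnion_le _)
    _ = ∑' n, μ (V (k n) + F) := by simp_rw [measure_vadd]
    _ ≤ ∑' n, (ε' n : ℝ≥0∞) := ENNReal.tsum_le_tsum fun n => (hk n).le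
    _ ≤ 0 + ε := by rw [zero_add]; exact hε'_sum.le

theorem iInter_add_subset_closure {G : Type*} [AddGroup G] [TopologicalSpace G]
    [IsTopologicalAddGroup G] {ι : Type*} {V : ι → Set G} (hV : ∀ U ∈ 𝓝 (0 : G), ∃ i, V i ⊆ U)
    (F : Set G) : ⋂ i, (V i + F) ⊆ closure F := by
  intro x hx
  rw [mem_closure_iff_nhds_zero]
  intro U hU
  obtain ⟨i, hi⟩ := hV (-U) (neg_mem_nhds_zero G hU)
  obtain ⟨v, hv, f, hf, rfl⟩ := mem_iInter.mp hx i
  exact ⟨f, hf, by simpa using hi hv⟩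

namespace PiNat

variable {E : ℕ → Type*}

theorem cylinder_eq_vadd [∀ n, AddGroup (E n)] (x : ∀ n, E n) (k : ℕ) :
    cylinder x k = x +ᵥ cylinder 0 k := by
  ext y
  simp [mem_vadd_set_iff_neg_vadd_mem, neg_add_eq_zero, eq_comm]

theorem sInf_setOf_ne_eq_firstDiff {x y : ∀ n, E n} (hne : x ≠ y) :
    sInf {n | x n ≠ y n} = firstDiff x y :=
  le_antisymm (Nat.sInf_le (apply_firstDiff_ne hne)) <| le_csInf ⟨_, apply_firstDiff_ne hne⟩
    fun _ hn => not_lt.mp fun h => hn (apply_eq_of_lt_firstDiff h)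

variable [∀ n, TopologicalSpace (E n)] [∀ n, DiscreteTopology (E n)]

theorem isClosed_cylinder (x : ∀ n, E n) (k : ℕ) : IsClosed (cylinder x k) := by
  rw [cylinder_eq_pi]
  exact isClosed_set_pi fun i _ => isClosed_discrete _

theorem exists_cylinder_subset_of_mem_nhds {x : ∀ n, E n} {U : Set (∀ n, E n)} (hU : U ∈ 𝓝 x) :
    ∃ k, cylinder x k ⊆ U := by
  obtain ⟨-, ⟨y, k, rfl⟩, hx, hsub⟩ := (isTopologicalBasis_cylinders E).mem_nhds_iff.mp hU
  exact ⟨k, (mem_cylinder_iff_eq.mp hx).trans_subset hsub⟩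

theorem tendsto_measure_cylinder_add [∀ n, AddGroup (E n)] [MeasurableSpace (∀ n, E n)]
    [OpensMeasurableSpace (∀ n, E n)] (μ : Measure (∀ n, E n)) [IsFiniteMeasure μ]
    {F : Set (∀ n, E n)} (hF : IsCompact F) :
    Tendsto (fun k => μ (cylinder 0 k + F)) atTop (𝓝 (μ F)) := by
  have hclosed : ∀ k, IsClosed (cylinder (0 : ∀ n, E n) k + F) := fun k =>
    (isClosed_cylinder 0 k).add_right_of_isCompact hF
  have hlim := tendsto_measure_iInter_atTop (μ := μ)
    (fun k => (hclosed k).measurableSet.nullMeasurableSet)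
    (fun _ _ hkl => add_subset_add_right (cylinder_anti 0 hkl)) ⟨0, measure_ne_top _ _⟩
  have hinter : ⋂ k, (cylinder (0 : ∀ n, E n) k + F) = F := by
    refine (iInter_add_subset_closure (fun U hU => exists_cylinder_subset_of_mem_nhds hU) F).trans
      hF.isClosed.closure_subset |>.antisymm fun f hf => mem_iInter.mpr fun k => ?_
    exact ⟨0, self_mem_cylinder 0 k, f, hf, zero_add f⟩
  rwa [hinter] at hlim

end PiNat

theorem cantorDist_eq_piNatDist : cantorDist = (PiNat.dist : Dist Cantor).dist := by
  let _ : Dist Cantor := PiNat.dist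
  ext x y
  rcases eq_or_ne x y with rfl | hne
  · simp [cantorDist, PiNat.dist_self]
  · rw [cantorDist, if_neg hne, dist_eq_of_ne hne, sInf_setOf_ne_eq_firstDiff hne]

theorem cantorBall_subset_cylinder (c : Cantor) (k : ℕ) :
    cantorBall c ((1 / 2) ^ k) ⊆ cylinder c k := by
  let _ : Dist Cantor := PiNat.dist
  intro y hy i hi
  have hdist : dist c y < (1 / 2) ^ k := by rw [← cantorDist_eq_piNatDist]; exact hy
  exact (apply_eq_of_dist_lt hdist hi.le).symm

theorem HasStrongMeasureZero.exists_cylinder_cover {X : Set Cantor} (hX : HasStrongMeasureZero X)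
    (k : ℕ → ℕ) : ∃ c : ℕ → Cantor, X ⊆ ⋃ n, cylinder (c n) (k n) := by
  obtain ⟨c, hc⟩ := hX (fun n => (1 / 2) ^ k n) fun n => by positivity
  exact ⟨c, hc.trans (iUnion_mono fun n => cantorBall_subset_cylinder (c n) (k n))⟩

instance : cantorMeasure.IsAddLeftInvariant := by unfold cantorMeasure; infer_instance

instance : IsFiniteMeasure cantorMeasure := by unfold cantorMeasure; infer_instance

/-- **Forward direction of Pawlikowski's characterization (Theorem 1).**
If `X ⊆ 2^ω` has strong measure zero, then for every closed null set `F ⊆ 2^ω`, the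
algebraic (pointwise) sum `X + F = {x + f : x ∈ X, f ∈ F}` has outer measure zero. -/
theorem smz_imp_add_closed_null_is_null (X : Set Cantor) (hX : HasStrongMeasureZero X) :
    ∀ F : Set Cantor, IsClosed F → cantorMeasure F = 0 → cantorMeasure (X + F) = 0 := by
  intro F hF hF_null
  refine measure_add_eq_zero_of_forall_translate_cover (V := cylinder 0) ?_ fun k => ?_
  · simpa [hF_null] using tendsto_measure_cylinder_add cantorMeasure hF.isCompact
  · obtain ⟨c, hc⟩ := hX.exists_cylinder_cover k
    exact ⟨c, by simpa only [← cylinder_eq_vadd] using hc⟩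
end

section
/- If X ⊆ 2^ω has strong measure zero, then for every dense G_δ set H ⊆ 2^ω there exists t ∈ 2^ω with t + X ⊆ H. (Consequence of Theorem 1 used in the proof of BC: strong measure zero sets can be translated into any dense G_δ set.) -/
open MeasureTheory Set Pointwise
open scoped Classical

/-! ### Auxiliary lemmas -/

/-- Membership in a small `cantorBall` forces agreement on an initial segment. -/
lemma agree_of_mem_cantorBall {c x : Cantor} {l : ℕ}
    (h : x ∈ cantorBall c ((1 / 2 : ℝ) ^ l)) : ∀ i < l, x i = c i := by
  intro i hi
  by_contra hne
  have hcx : c ≠ x := fun he => hne (by rw [he])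
  simp only [cantorBall, cantorDist, mem_setOf_eq, if_neg hcx] at h
  have hiD : i ∈ {n : ℕ | c n ≠ x n} := fun he => hne he.symm
  have h1 : sInf {n : ℕ | c n ≠ x n} ≤ i := Nat.sInf_le hiD
  have h3 : sInf {n : ℕ | c n ≠ x n} ≤ l := h1.trans hi.le
  have h4 : ((1 / 2 : ℝ)) ^ l ≤ (1 / 2) ^ sInf {n : ℕ | c n ≠ x n} :=
    pow_le_pow_of_le_one (by norm_num) (by norm_num) h3
  linarith

/-- In `2^ω`, `v + v = 0` coordinatewise. -/
lemma zmod2_add_self (v : ZMod 2) : v + v = 0 := by revert v; decide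

/-- Uniform extension lemma: for an open dense `U` and a length `k`, there is a single
length `l > k` such that every `y` can be modified beyond coordinate `k` to a point `z`
whose cylinder of length `l` is contained in `U`. -/
lemma exists_uniform_ext (U : Set Cantor) (hU : IsOpen U) (hd : Dense U) (k : ℕ) :
    ∃ l, k < l ∧ ∀ y : Cantor, ∃ z : Cantor,
      (∀ i < k, z i = y i) ∧ PiNat.cylinder z l ⊆ U := by
  -- for each pattern `σ` on `Fin k`, find a good cylinder inside `U`
  have key : ∀ σ : Fin k → ZMod 2, ∃ (z : Cantor) (m : ℕ),
      (∀ i (hik : i < k), z i = σ ⟨i, hik⟩) ∧ PiNat.cylinder z m ⊆ U := by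
    intro σ
    set yσ : Cantor := fun i => if hik : i < k then σ ⟨i, hik⟩ else 0 with hyσ
    have hopen : IsOpen (PiNat.cylinder yσ k) := PiNat.isOpen_cylinder (fun _ : ℕ => ZMod 2) yσ k
    have hne : (PiNat.cylinder yσ k).Nonempty := ⟨yσ, PiNat.self_mem_cylinder _ _⟩
    obtain ⟨w, hwU, hwc⟩ := hd.exists_mem_open hopen hne
    obtain ⟨v, ⟨x, m, rfl⟩, hwv, hvU⟩ :=
      (PiNat.isTopologicalBasis_cylinders (fun _ : ℕ => ZMod 2)).isOpen_iff.1 hU w hwU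
    refine ⟨w, m, ?_, ?_⟩
    · intro i hik
      have := (PiNat.mem_cylinder_iff.1 hwc) i hik
      simpa [hyσ, hik] using this
    · have : PiNat.cylinder w m = PiNat.cylinder x m := PiNat.mem_cylinder_iff_eq.1 hwv
      rw [this]; exact hvU
  choose z m hz hzs using key
  refine ⟨(Finset.univ.sup m) + k + 1, by omega, fun y => ?_⟩
  set σ : Fin k → ZMod 2 := fun i => y i with hσ
  refine ⟨z σ, fun i hik => by simpa using hz σ i hik, ?_⟩
  refine subset_trans (PiNat.cylinder_anti _ ?_) (hzs σ)
  have := Finset.le_sup (f := m) (Finset.mem_univ σ)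
  omega

/-- Auxiliary recursion on `ℕ` producing naturals. -/
def natRecAux (f : ℕ → ℕ → ℕ) : ℕ → ℕ
  | 0 => 0
  | s + 1 => f s (natRecAux f s)

/-- Auxiliary recursion on `ℕ` producing points of `2^ω`. -/
def cantorRecAux (g : ℕ → Cantor → Cantor) : ℕ → Cantor
  | 0 => fun _ => 0
  | s + 1 => g s (cantorRecAux g s)

/-- **Consequence of Theorem 1 used in the proof of BC.**
A strong measure zero set `X ⊆ 2^ω` can be translated into any dense `G_δ` set:
for every dense `G_δ` set `H ⊆ 2^ω` there is `t ∈ 2^ω` with `t + X ⊆ H`. -/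
theorem smz_translate_into_denseGdelta (X : Set Cantor) (hX : HasStrongMeasureZero X) :
    ∀ H : Set Cantor, Dense H → IsGδ H → ∃ t : Cantor, t +ᵥ X ⊆ H := by
  intro H hdense hGδ
  obtain ⟨U, hUopen, rfl⟩ := hGδ.eq_iInter_nat
  have hUdense : ∀ n, Dense (U n) := fun n => hdense.mono (iInter_subset U n)
  -- uniform extension data
  have hA : ∀ n k, ∃ l, k < l ∧ ∀ y : Cantor, ∃ z : Cantor,
      (∀ i < k, z i = y i) ∧ PiNat.cylinder z l ⊆ U n :=
    fun n k => exists_uniform_ext (U n) (hUopen n) (hUdense n) k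
  choose L hLgt hLy using hA
  choose Z hZagree hZsub using hLy
  -- pairing
  set e : ℕ ≃ ℕ × ℕ := (Denumerable.eqv (ℕ × ℕ)).symm with he
  -- the sequence of lengths
  set K : ℕ → ℕ := natRecAux (fun s ks => L (e s).1 ks) with hK
  have hK0 : K 0 = 0 := rfl
  have hKsucc : ∀ s, K (s + 1) = L (e s).1 (K s) := fun s => rfl
  have hKlt : ∀ s, K s < K (s + 1) := fun s => by rw [hKsucc]; exact hLgt _ _
  have hKmono : ∀ ⦃s s'⦄, s ≤ s' → K s ≤ K s' := by
    intro s s' hss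
    induction hss with
    | refl => exact le_refl _
    | step h ih => exact ih.trans (hKlt _).le
  have hKge : ∀ s, s ≤ K s := by
    intro s
    induction s with
    | zero => simp
    | succ s ih => exact Nat.lt_of_le_of_lt ih (hKlt s)
  -- apply strong measure zero, one sequence per `n`
  have hEps : ∀ n : ℕ, ∃ c : ℕ → Cantor,
      X ⊆ ⋃ j, cantorBall (c j) ((1 / 2 : ℝ) ^ K (e.symm (n, j) + 1)) := by
    intro n
    exact hX (fun j => (1 / 2 : ℝ) ^ K (e.symm (n, j) + 1)) (fun j => by positivity)
  choose c hc using hEps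
  -- the recursive construction of approximations to `t`
  set T : ℕ → Cantor := cantorRecAux
    (fun s ts => Z (e s).1 (K s) (ts + c (e s).1 (e s).2) + c (e s).1 (e s).2) with hT
  have hTsucc : ∀ s, T (s + 1)
      = Z (e s).1 (K s) (T s + c (e s).1 (e s).2) + c (e s).1 (e s).2 := fun s => rfl
  -- successive approximations agree on initial segments
  have hagree : ∀ s, ∀ i < K s, T (s + 1) i = T s i := by
    intro s i hi
    rw [hTsucc]
    have h1 := hZagree (e s).1 (K s) (T s + c (e s).1 (e s).2) i hi
    show Z (e s).1 (K s) (T s + c (e s).1 (e s).2) i + c (e s).1 (e s).2 i = T s i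
    rw [h1]
    show T s i + c (e s).1 (e s).2 i + c (e s).1 (e s).2 i = T s i
    rw [add_assoc, zmod2_add_self, add_zero]
  have hagree' : ∀ ⦃s s'⦄, s ≤ s' → ∀ i < K s, T s' i = T s i := by
    intro s s' hss
    induction hss with
    | refl => intro i _; rfl
    | @step m h ih =>
        intro i hi
        rw [hagree m i (lt_of_lt_of_le hi (hKmono h)), ih i hi]
  -- the translation `t`
  set t : Cantor := fun i => T (i + 1) i with htdef
  have ht : ∀ s, ∀ i < K s, t i = T s i := by
    intro s i hi
    rcases le_total s (i + 1) with h | h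
    · exact hagree' h i hi
    · exact (hagree' h i (lt_of_lt_of_le (Nat.lt_succ_self i) (hKge (i + 1)))).symm
  refine ⟨t, ?_⟩
  rintro a ⟨x, hxX, rfl⟩
  rw [mem_iInter]
  intro n
  obtain ⟨j, hj⟩ := mem_iUnion.1 (hc n hxX)
  set s : ℕ := e.symm (n, j) with hs
  have hes : e s = (n, j) := e.apply_symm_apply _
  have hxc : ∀ i < K (s + 1), x i = c n j i := agree_of_mem_cantorBall hj
  have hsub : PiNat.cylinder (Z (e s).1 (K s) (T s + c (e s).1 (e s).2)) (K (s + 1)) ⊆ U n := by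
    rw [hKsucc, hes]
    exact hZsub n (K s) _
  refine hsub ?_
  rw [PiNat.mem_cylinder_iff]
  intro i hi
  have h2 : t i = T (s + 1) i := ht (s + 1) i hi
  have h3 : T (s + 1) i = Z (e s).1 (K s) (T s + c (e s).1 (e s).2) i + c (e s).1 (e s).2 i :=
    congrFun (hTsucc s) i
  have h5 : t i + x i = Z (e s).1 (K s) (T s + c (e s).1 (e s).2) i := by
    have hce : c (e s).1 (e s).2 i = c n j i := by rw [hes]
    rw [h2, h3, hxc i hi, hce, add_assoc, zmod2_add_self, add_zero]
  exact h5
end
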